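/- Let q ∈ [0,1) and p ≥ 0. There exists a constant C > 0, depending only on p and q, such that for every γ₀ > 0 and every integer T ≥ 1, setting η_t = (2/(t+2))^q and γ_t = γ₀·(2/(t+2))^p for integers t ≥ 0, one has: Σ_{t=0}^{T−1} γ_t · Π_{τ=t+1}^{T−1} (1 − η_τ) ≤ C · γ_T · η_T^{−1}, where the product over an empty index range (for t = T−1) is equal to 1. -/

import Mathlib

/-!
Write `x_T = 2/(T+2)` (`decayRate T` below), so that `η_T = x_T^q` and `γ_T = γ₀ x_T^p`. The sum `S_T` satisfies
`S_{T+1} = (1 - η_T) S_T + γ_T`, and we propagate the bound `S_T ≤ C γ₀ a_T` with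
`a_T = x_T^(p-q) = γ_T / (γ₀ η_T)`. Bernoulli's inequality gives
`a_T - a_{T+1} ≤ max(p-q, 1) a_T / (T+2)`, while `η_T (T+2) = 2^q (T+2)^(1-q) → ∞` because
`q < 1`; so for `C ≥ 2` the bound survives a step of the recursion once `T` is past some `N`.
Below `N` it holds for `C` large, as `S_T ≤ γ₀ T`.
-/

open Finset Filter

noncomputable def decayRate (t : ℕ) : ℝ := 2 / ((t : ℝ) + 2)

lemma decayRate_pos (t : ℕ) : 0 < decayRate t := by
  unfold decayRate; positivity

lemma decayRate_le_one (t : ℕ) : decayRate t ≤ 1 := by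
  rw [decayRate, div_le_one (by positivity)]
  linarith [(t.cast_nonneg : (0 : ℝ) ≤ t)]

lemma decayRate_antitone : Antitone decayRate := fun s t hst => by
  unfold decayRate
  gcongr

lemma decayRate_succ (t : ℕ) :
    decayRate (t + 1) = decayRate t * (((t : ℝ) + 2) / ((t : ℝ) + 3)) := by
  unfold decayRate
  push_cast
  field_simp
  ring

lemma one_sub_decayRate_rpow_nonneg {q : ℝ} (hq : 0 ≤ q) (t : ℕ) :
    0 ≤ 1 - decayRate t ^ q := by
  linarith [Real.rpow_le_one (decayRate_pos t).le (decayRate_le_one t) hq]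

lemma tendsto_decayRate_rpow_mul_atTop {q : ℝ} (hq : q < 1) :
    Tendsto (fun T : ℕ => decayRate T ^ q * ((T : ℝ) + 2)) atTop atTop := by
  have hform : ∀ T : ℕ, decayRate T ^ q * ((T : ℝ) + 2) = 2 ^ q * ((T : ℝ) + 2) ^ (1 - q) := by
    intro T
    have hT : (0 : ℝ) < T + 2 := by positivity
    rw [decayRate, Real.div_rpow zero_le_two hT.le, Real.rpow_sub hT, Real.rpow_one]
    field_simp
  simp only [hform]
  refine Tendsto.const_mul_atTop (by positivity) ((tendsto_rpow_atTop (by linarith)).comp ?_)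
  exact tendsto_atTop_add_const_right _ _ tendsto_natCast_atTop_atTop

lemma one_sub_rpow_le_max_mul {y : ℝ} (hy0 : 0 < y) (hy1 : y ≤ 1) (r : ℝ) :
    1 - y ^ r ≤ max r 1 * (1 - y) := by
  rcases le_total r 1 with hr | hr
  · have : y ≤ y ^ r := by
      simpa using Real.rpow_le_rpow_of_exponent_ge hy0 hy1 hr
    rw [max_eq_right hr]
    linarith
  · have : 1 + r * (y - 1) ≤ y ^ r := by
      simpa using one_add_mul_self_le_rpow_one_add (by linarith : (-1 : ℝ) ≤ y - 1) hr
    rw [max_eq_left hr]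
    linarith

lemma decayRate_rpow_sub_succ_le (r : ℝ) (T : ℕ) :
    decayRate T ^ r - decayRate (T + 1) ^ r ≤ max r 1 / ((T : ℝ) + 2) * decayRate T ^ r := by
  set y : ℝ := ((T : ℝ) + 2) / ((T : ℝ) + 3)
  have hy0 : 0 < y := by positivity
  have hone_sub : 1 - y = 1 / ((T : ℝ) + 3) := by
    simp only [y]
    field_simp
    ring
  have hyle : y ≤ 1 := div_le_one_of_le₀ (by linarith) (by positivity)
  have hbound : 1 - y ^ r ≤ max r 1 / ((T : ℝ) + 2) := by
    calc 1 - y ^ r ≤ max r 1 * (1 - y) := one_sub_rpow_le_max_mul hy0 hyle r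
      _ = max r 1 / ((T : ℝ) + 3) := by rw [hone_sub]; ring
      _ ≤ max r 1 / ((T : ℝ) + 2) := by
        gcongr
        norm_num
  rw [decayRate_succ, Real.mul_rpow (decayRate_pos T).le hy0.le]
  nlinarith [Real.rpow_pos_of_pos (decayRate_pos T) r]

lemma sum_mul_prod_Ico_succ {R : Type*} [CommSemiring R] (f g : ℕ → R) (T : ℕ) :
    ∑ t ∈ range (T + 1), f t * ∏ s ∈ Ico (t + 1) (T + 1), g s
      = g T * ∑ t ∈ range T, f t * ∏ s ∈ Ico (t + 1) T, g s + f T := by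
  rw [sum_range_succ, Ico_self, prod_empty, mul_one, mul_sum]
  congr 1
  refine sum_congr rfl fun t ht => ?_
  rw [prod_Ico_succ_top (mem_range.mp ht)]
  ring

lemma le_of_step_le {α : Type*} [Semiring α] [PartialOrder α] [IsOrderedRing α]
    {S b f g : ℕ → α} {N : ℕ} (hS : ∀ T, S (T + 1) ≤ g T * S T + f T) (hg : ∀ T, 0 ≤ g T)
    (hb : ∀ T, N ≤ T → g T * b T + f T ≤ b (T + 1)) (hN : ∀ T ≤ N, S T ≤ b T) (T : ℕ) :
    S T ≤ b T := by
  induction T with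
  | zero => exact hN 0 (Nat.zero_le N)
  | succ T ih =>
    rcases le_or_gt (T + 1) N with h | h
    · exact hN _ h
    · calc S (T + 1) ≤ g T * S T + f T := hS T
        _ ≤ g T * b T + f T := by gcongr; exact hg T
        _ ≤ b (T + 1) := hb T (by omega)

noncomputable def weightedSum (p q : ℝ) (T : ℕ) : ℝ :=
  ∑ t ∈ range T, decayRate t ^ p * ∏ s ∈ Ico (t + 1) T, (1 - decayRate s ^ q)

lemma weightedSum_succ (p q : ℝ) (T : ℕ) :
    weightedSum p q (T + 1) = (1 - decayRate T ^ q) * weightedSum p q T + decayRate T ^ p :=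
  sum_mul_prod_Ico_succ _ _ T

lemma weightedSum_le_card {p q : ℝ} (hp : 0 ≤ p) (hq : 0 ≤ q) (T : ℕ) :
    weightedSum p q T ≤ T := by
  have hterm : ∀ t ∈ range T,
      decayRate t ^ p * ∏ s ∈ Ico (t + 1) T, (1 - decayRate s ^ q) ≤ 1 := fun t _ =>
    mul_le_one₀ (Real.rpow_le_one (decayRate_pos t).le (decayRate_le_one t) hp)
      (prod_nonneg fun s _ => one_sub_decayRate_rpow_nonneg hq s)
      (prod_le_one (fun s _ => one_sub_decayRate_rpow_nonneg hq s)
        fun s _ => by linarith [Real.rpow_pos_of_pos (decayRate_pos s) q])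
  simpa [weightedSum] using sum_le_sum hterm

lemma weightedSum_bound_step {p q C : ℝ} (hC : 2 ≤ C) {T : ℕ}
    (hT : 2 * max (p - q) 1 ≤ decayRate T ^ q * ((T : ℝ) + 2)) :
    (1 - decayRate T ^ q) * (C * decayRate T ^ (p - q)) + decayRate T ^ p
      ≤ C * decayRate (T + 1) ^ (p - q) := by
  set M := max (p - q) 1
  set η := decayRate T ^ q
  set a := decayRate T ^ (p - q)
  have ha : 0 < a := Real.rpow_pos_of_pos (decayRate_pos T) _
  have hM : 1 ≤ M := le_max_right _ _
  have hpow : decayRate T ^ p = a * η := by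
    rw [← Real.rpow_add (decayRate_pos T), sub_add_cancel]
  have hdrop := decayRate_rpow_sub_succ_le (p - q) T
  have hrate : C * (M / ((T : ℝ) + 2)) ≤ (C - 1) * η := by
    rw [← mul_div_assoc, div_le_iff₀ (by positivity)]
    nlinarith [mul_le_mul_of_nonneg_left hT (by linarith : (0 : ℝ) ≤ C - 1)]
  rw [hpow]
  nlinarith [mul_le_mul_of_nonneg_right hrate ha.le,
    mul_le_mul_of_nonneg_left hdrop (by linarith : (0 : ℝ) ≤ C)]

lemma exists_weightedSum_le {p q : ℝ} (hp : 0 ≤ p) (hq0 : 0 ≤ q) (hq1 : q < 1) :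
    ∃ C > 0, ∀ T, weightedSum p q T ≤ C * decayRate T ^ (p - q) := by
  obtain ⟨N, hN⟩ := eventually_atTop.mp
    ((tendsto_decayRate_rpow_mul_atTop hq1).eventually_ge_atTop (2 * max (p - q) 1))
  have hxN : 0 < decayRate N ^ p := Real.rpow_pos_of_pos (decayRate_pos N) p
  set C := max 2 (N / decayRate N ^ p)
  refine ⟨C, by positivity, le_of_step_le (fun T => (weightedSum_succ p q T).le)
    (one_sub_decayRate_rpow_nonneg hq0)
    (fun T hT => weightedSum_bound_step (le_max_left _ _) (hN T hT)) fun T hT => ?_⟩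
  have hxT : decayRate N ^ p ≤ decayRate T ^ (p - q) :=
    calc decayRate N ^ p ≤ decayRate T ^ p :=
          Real.rpow_le_rpow (decayRate_pos N).le (decayRate_antitone hT) hp
      _ ≤ decayRate T ^ (p - q) :=
          Real.rpow_le_rpow_of_exponent_ge (decayRate_pos T) (decayRate_le_one T) (by linarith)
  calc weightedSum p q T ≤ T := weightedSum_le_card hp hq0 T
    _ ≤ N := by exact_mod_cast hT
    _ = N / decayRate N ^ p * decayRate N ^ p := (div_mul_cancel₀ _ hxN.ne').symm
    _ ≤ C * decayRate T ^ (p - q) := by gcongr; exact le_max_right _ _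

theorem stmt_8 (q p : ℝ) (hq0 : 0 ≤ q) (hq1 : q < 1) (hp : 0 ≤ p) :
    ∃ C > (0 : ℝ), ∀ γ₀ : ℝ, 0 < γ₀ → ∀ T : ℕ, 1 ≤ T →
      ∑ t ∈ range T, (γ₀ * (2 / ((t : ℝ) + 2)) ^ p) *
          ∏ s ∈ Ico (t + 1) T, (1 - (2 / ((s : ℝ) + 2)) ^ q)
        ≤ C * (γ₀ * (2 / ((T : ℝ) + 2)) ^ p) * ((2 / ((T : ℝ) + 2)) ^ q)⁻¹ := by
  obtain ⟨C, hC, hbound⟩ := exists_weightedSum_le hp hq0 hq1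
  refine ⟨C, hC, fun γ₀ hγ₀ T _ => ?_⟩
  have hlhs : ∑ t ∈ range T, (γ₀ * (2 / ((t : ℝ) + 2)) ^ p) *
      ∏ s ∈ Ico (t + 1) T, (1 - (2 / ((s : ℝ) + 2)) ^ q) = γ₀ * weightedSum p q T := by
    simp only [weightedSum, decayRate, mul_sum, mul_assoc]
  have hrhs : C * (γ₀ * (2 / ((T : ℝ) + 2)) ^ p) * ((2 / ((T : ℝ) + 2)) ^ q)⁻¹
      = γ₀ * (C * decayRate T ^ (p - q)) := by
    rw [Real.rpow_sub (decayRate_pos T), decayRate]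
    ring
  rw [hlhs, hrhs]
  exact mul_le_mul_of_nonneg_left (hbound T) hγ₀.le
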